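/- Let U be a real m×r matrix with orthonormal columns (Uᵀ U = 1), let V be a real n×s matrix with orthonormal columns (Vᵀ V = 1), and let K be a real m×n matrix. Then ‖K − U·Uᵀ·K·V·Vᵀ‖_F² ≤ ‖K − U·Uᵀ·K‖_F² + ‖K − K·V·Vᵀ‖_F². (This is the per-block inequality in the proof of Theorem 5.3: the error of the two-sided projection U·Uᵀ·K·V·Vᵀ is bounded by the sum of the squared errors of the one-sided column and row projections.) -/

import Mathlib

open Matrix

/-- Frobenius norm of a real matrix. -/
noncomputable def frobNorm {α β : Type*} [Fintype α] [Fintype β] (A : Matrix α β ℝ) : ℝ :=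
  Real.sqrt (∑ i, ∑ j, A i j ^ 2)

/-!
With `P = U Uᵀ`, the orthogonal projection onto the column space of `U`, the residual splits as
`K - P K V Vᵀ = (1 - P) K + P (K - K V Vᵀ)`. The two summands are Frobenius-orthogonal because
`(1 - P) P = 0`, so by Pythagoras the squared error is `‖(1 - P) K‖² + ‖P (K - K V Vᵀ)‖²`, and the
projection `P` does not increase the Frobenius norm.
-/

section Frobenius

variable {ι κ : Type*} [Fintype ι]

theorem transpose_mul_mul_eq_zero_of_isStarProjection [DecidableEq ι] {P : Matrix ι ι ℝ}
    (hP : IsStarProjection P) (A B : Matrix ι κ ℝ) : ((1 - P) * A)ᵀ * (P * B) = 0 := by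
  have hPt : (1 - P)ᵀ = 1 - P := by
    rw [← conjTranspose_eq_transpose_of_trivial]
    exact hP.one_sub.isSelfAdjoint
  rw [transpose_mul, hPt, Matrix.mul_assoc, ← Matrix.mul_assoc (1 - P),
    hP.isIdempotentElem.one_sub_mul_self, Matrix.zero_mul, Matrix.mul_zero]

variable [Fintype κ]

theorem isStarProjection_mul_transpose [DecidableEq κ] {U : Matrix ι κ ℝ} (hU : Uᵀ * U = 1) :
    IsStarProjection (U * Uᵀ) where
  isIdempotentElem := by
    rw [IsIdempotentElem, Matrix.mul_assoc, ← Matrix.mul_assoc Uᵀ, hU, Matrix.one_mul]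
  isSelfAdjoint := by
    rw [IsSelfAdjoint, star_eq_conjTranspose, conjTranspose_eq_transpose_of_trivial, transpose_mul,
      transpose_transpose]

theorem frobNorm_nonneg (A : Matrix ι κ ℝ) : 0 ≤ frobNorm A :=
  Real.sqrt_nonneg _

theorem frobNorm_sq_eq_trace (A : Matrix ι κ ℝ) : frobNorm A ^ 2 = trace (Aᵀ * A) := by
  rw [frobNorm, Real.sq_sqrt (by positivity), Finset.sum_comm]
  simp only [trace, diag_apply, mul_apply, transpose_apply, sq]

theorem frobNorm_add_sq_of_transpose_mul_eq_zero {A B : Matrix ι κ ℝ} (h : Aᵀ * B = 0) :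
    frobNorm (A + B) ^ 2 = frobNorm A ^ 2 + frobNorm B ^ 2 := by
  have h' : Bᵀ * A = 0 := by
    rw [← transpose_transpose (Bᵀ * A), transpose_mul, transpose_transpose, h, transpose_zero]
  simp only [frobNorm_sq_eq_trace, transpose_add, Matrix.add_mul, Matrix.mul_add, h, h', trace_add,
    add_zero, zero_add]

theorem frobNorm_mul_le_of_isStarProjection [DecidableEq ι] {P : Matrix ι ι ℝ}
    (hP : IsStarProjection P) (A : Matrix ι κ ℝ) : frobNorm (P * A) ≤ frobNorm A := by
  have hsplit : frobNorm A ^ 2 = frobNorm ((1 - P) * A) ^ 2 + frobNorm (P * A) ^ 2 := by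
    rw [← frobNorm_add_sq_of_transpose_mul_eq_zero
      (transpose_mul_mul_eq_zero_of_isStarProjection hP A A), ← Matrix.add_mul, sub_add_cancel,
      Matrix.one_mul]
  refine le_of_sq_le_sq ?_ (frobNorm_nonneg A)
  rw [hsplit]
  exact le_add_of_nonneg_left (sq_nonneg _)

end Frobenius

theorem two_sided_projection_inequality_general {m n r s : ℕ}
    (U : Matrix (Fin m) (Fin r) ℝ) (V : Matrix (Fin n) (Fin s) ℝ)
    (K : Matrix (Fin m) (Fin n) ℝ)
    (hU : Uᵀ * U = 1) :
    frobNorm (K - U * Uᵀ * K * V * Vᵀ) ^ 2 ≤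
      frobNorm (K - U * Uᵀ * K) ^ 2 + frobNorm (K - K * V * Vᵀ) ^ 2 := by
  set P := U * Uᵀ
  have hP : IsStarProjection P := isStarProjection_mul_transpose hU
  have hsplit : K - P * K * V * Vᵀ = (1 - P) * K + P * (K - K * V * Vᵀ) := by
    simp only [Matrix.sub_mul, Matrix.mul_sub, Matrix.one_mul, Matrix.mul_assoc]
    abel
  have hleft : K - P * K = (1 - P) * K := by rw [Matrix.sub_mul, Matrix.one_mul]
  rw [hsplit, hleft, frobNorm_add_sq_of_transpose_mul_eq_zero
    (transpose_mul_mul_eq_zero_of_isStarProjection hP _ _)]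
  gcongr
  · exact frobNorm_nonneg _
  · exact frobNorm_mul_le_of_isStarProjection hP _

theorem two_sided_projection_inequality {m n r s : ℕ}
    (U : Matrix (Fin m) (Fin r) ℝ) (V : Matrix (Fin n) (Fin s) ℝ)
    (K : Matrix (Fin m) (Fin n) ℝ)
    (hU : Uᵀ * U = 1) (hV : Vᵀ * V = 1) :
    frobNorm (K - U * Uᵀ * K * V * Vᵀ) ^ 2 ≤
      frobNorm (K - U * Uᵀ * K) ^ 2 + frobNorm (K - K * V * Vᵀ) ^ 2 :=
  two_sided_projection_inequality_general U V K hU
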